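/- For a standard Young tableau T with n boxes and 1 < i < n, the result D_i(T) of applying the elementary dual equivalence operator to T is again a standard Young tableau. -/

import Mathlib

open scoped Classical

/-- A cell `(row, column)` of a Young diagram. -/
abbrev Cell := ℕ × ℕ

/-- A standard Young tableau with `n` boxes, encoded by the position `p k` of each
entry `k ∈ [n]`: the positions are distinct, and for each `k ≤ n` the set of
positions of the entries `1, ..., k` is a Young diagram (a lower set in `ℕ × ℕ`). -/
def IsStdTab (n : ℕ) (p : ℕ → Cell) : Prop :=
  Set.InjOn p (Set.Icc 1 n) ∧
  ∀ k, k ≤ n → ∀ j ∈ Set.Icc 1 k, ∀ c : Cell,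
    c.1 ≤ (p j).1 → c.2 ≤ (p j).2 → ∃ m ∈ Set.Icc 1 k, p m = c

/-- `readLt a b` : the cell `a` comes strictly before the cell `b` in the
row reading order (rows read from bottom to top, left to right). -/
def readLt (a b : Cell) : Prop := b.1 < a.1 ∨ (a.1 = b.1 ∧ a.2 < b.2)

/-- The entry `x` lies (strictly) between the entries `y` and `z` in the row
reading word of the tableau with position function `p`. -/
def btwIn (p : ℕ → Cell) (x y z : ℕ) : Prop :=
  (readLt (p y) (p x) ∧ readLt (p x) (p z)) ∨ (readLt (p z) (p x) ∧ readLt (p x) (p y))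

/-- The elementary dual equivalence operator `D_i`: it equals `s_{i-1}(T)` if `i+1`
lies between `i` and `i-1` in the reading word, `s_i(T)` if `i-1` lies between `i`
and `i+1`, and `T` otherwise; here `s_j(T)` swaps the entries `j` and `j+1`. -/
noncomputable def Dop (i : ℕ) (p : ℕ → Cell) : ℕ → Cell :=
  if btwIn p (i + 1) i (i - 1) then p ∘ (Equiv.swap (i - 1) i)
  else if btwIn p (i - 1) i (i + 1) then p ∘ (Equiv.swap i (i + 1))
  else p

/-!
`D_i` swaps two consecutive entries `j, j + 1`, and such a swap keeps the tableau standard as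
long as the cell of `j + 1` does not dominate the cell of `j`. If it did, the two cells would form
a covering pair of `ℕ × ℕ`. Side by side in a row, nothing lies between them in the reading word;
one on top of the other, every cell read between them carries an entry `≤ j - 2` or `≥ j + 3`.
Either way neither `j - 1` nor `j + 2` lies between `j` and `j + 1`, which is exactly what
triggers the swap.
-/

open Set

theorem isStdTab_iff {n : ℕ} {p : ℕ → Cell} :
    IsStdTab n p ↔ InjOn p (Icc 1 n) ∧ ∀ k ≤ n, IsLowerSet (p '' Icc 1 k) := by
  refine and_congr_right' (forall₂_congr fun k _ => ?_)
  simp only [IsLowerSet, mem_image, forall_exists_index, and_imp]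
  constructor
  · rintro h a b hba j hj rfl
    exact h j hj b (Prod.le_def.1 hba).1 (Prod.le_def.1 hba).2
  · intro h j hj c h₁ h₂
    exact h (Prod.le_def.2 ⟨h₁, h₂⟩) j hj rfl

theorem btwIn_comm {p : ℕ → Cell} {x y z : ℕ} : btwIn p x y z ↔ btwIn p x z y :=
  or_comm

namespace IsStdTab

variable {n : ℕ} {p : ℕ → Cell}

theorem mem_image_of_le (hp : IsStdTab n p) {k m : ℕ} (hk : k ≤ n) (hm : m ∈ Icc 1 k)
    {c : Cell} (hc : c ≤ p m) : c ∈ p '' Icc 1 k :=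
  (isStdTab_iff.1 hp).2 k hk hc (mem_image_of_mem p hm)

theorem le_of_cell_le (hp : IsStdTab n p) {l m : ℕ} (hl : l ∈ Icc 1 n) (hm : m ∈ Icc 1 n)
    (h : p l ≤ p m) : l ≤ m := by
  obtain ⟨k, hk, hkl⟩ := hp.mem_image_of_le hm.2 ⟨hm.1, le_rfl⟩ h
  rw [hp.1 (Icc_subset_Icc_right hm.2 hk) hl hkl] at hk
  exact hk.2

theorem exists_mem_Icc_of_le_of_le (hp : IsStdTab n p) {l m : ℕ} (hl : l ∈ Icc 1 n)
    (hm : m ∈ Icc 1 n) {c : Cell} (hlc : p l ≤ c) (hcm : c ≤ p m) : ∃ k ∈ Icc l m, p k = c := by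
  obtain ⟨k, hk, rfl⟩ := hp.mem_image_of_le hm.2 ⟨hm.1, le_rfl⟩ hcm
  exact ⟨k, ⟨hp.le_of_cell_le hl ⟨hk.1, hk.2.trans hm.2⟩ hlc, hk.2⟩, rfl⟩

theorem covBy_of_le (hp : IsStdTab n p) {j : ℕ} (hj : 1 ≤ j) (hjn : j + 1 ≤ n)
    (h : p j ≤ p (j + 1)) : p j ⋖ p (j + 1) := by
  have hne : p j ≠ p (j + 1) := fun he => by
    have := hp.1 ⟨hj, by omega⟩ ⟨by omega, hjn⟩ he
    omega
  refine covBy_iff_lt_and_eq_or_eq.2 ⟨h.lt_of_ne hne, fun c hjc hcj => ?_⟩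
  obtain ⟨k, hk, rfl⟩ := hp.exists_mem_Icc_of_le_of_le ⟨hj, by omega⟩ ⟨by omega, hjn⟩ hjc hcj
  obtain rfl | rfl : k = j ∨ k = j + 1 := by simp only [mem_Icc] at hk; omega
  exacts [.inl rfl, .inr rfl]

theorem lt_or_lt_of_btwIn_succ (hp : IsStdTab n p) {j m : ℕ} (hj : 1 ≤ j) (hjn : j + 1 ≤ n)
    (hm : m ∈ Icc 1 n) (h : p j ≤ p (j + 1)) (hb : btwIn p m j (j + 1)) :
    m + 1 < j ∨ j + 2 < m := by
  have hcov := hp.covBy_of_le hj hjn h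
  rw [Prod.covBy_iff, Nat.covBy_iff_add_one_eq, Nat.covBy_iff_add_one_eq] at hcov
  unfold btwIn readLt at hb
  rcases hcov with ⟨hbelow, hcol⟩ | ⟨hright, hrow⟩
  · obtain ⟨hq₁, hq₂⟩ | ⟨hq₁, hq₂⟩ :
        (p m).1 = (p (j + 1)).1 ∧ (p j).2 < (p m).2 ∨ (p m).1 = (p j).1 ∧ (p m).2 < (p j).2 := by
      omega
    -- the cell above `p m` holds an entry strictly between `j + 1` and `m`
    · obtain ⟨k, hk, hpk⟩ := hp.exists_mem_Icc_of_le_of_le (c := ((p j).1, (p m).2))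
        ⟨hj, by omega⟩ hm (Prod.le_def.2 ⟨le_rfl, hq₂.le⟩) (Prod.le_def.2 ⟨by omega, le_rfl⟩)
      have : k ≠ j ∧ k ≠ j + 1 ∧ k ≠ m := by
        refine ⟨?_, ?_, ?_⟩ <;> rintro rfl <;> simp only [Prod.ext_iff] at hpk <;> omega
      simp only [mem_Icc] at hk
      omega
    -- the cell below `p m` holds an entry strictly between `m` and `j`
    · obtain ⟨k, hk, hpk⟩ := hp.exists_mem_Icc_of_le_of_le (c := ((p (j + 1)).1, (p m).2))
        hm ⟨by omega, hjn⟩ (Prod.le_def.2 ⟨by omega, le_rfl⟩) (Prod.le_def.2 ⟨le_rfl, by omega⟩)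
      have : k ≠ j ∧ k ≠ j + 1 ∧ k ≠ m := by
        refine ⟨?_, ?_, ?_⟩ <;> rintro rfl <;> simp only [Prod.ext_iff] at hpk <;> omega
      simp only [mem_Icc] at hk
      omega
  · omega

theorem comp_swap (hp : IsStdTab n p) {j : ℕ} (hj : 1 ≤ j) (hjn : j + 1 ≤ n)
    (h : ¬p j ≤ p (j + 1)) : IsStdTab n (p ∘ Equiv.swap j (j + 1)) := by
  set σ := Equiv.swap j (j + 1) with hσ_def
  have hσ : ∀ k, k ≠ j → σ '' Icc 1 k = Icc 1 k := fun k hk => by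
    ext x
    rw [Equiv.image_eq_preimage_symm, hσ_def, Equiv.symm_swap, mem_preimage,
      Equiv.swap_apply_def]
    split_ifs <;> simp only [mem_Icc] <;> omega
  refine isStdTab_iff.2 ⟨hp.1.comp σ.injective.injOn ?_, fun k hk => ?_⟩
  · exact mapsTo_iff_image_subset.2 (hσ n (by omega)).subset
  -- only for `k = j` does the set of entries `σ '' Icc 1 k` change, to `{1, …, j - 1, j + 1}`
  by_cases hkj : k = j
  · rw [hkj]
    rintro b a hba ⟨m, hm, rfl⟩
    obtain ⟨hσm, hσmj⟩ : σ m ∈ Icc 1 (j + 1) ∧ σ m ≠ j := by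
      simp only [mem_Icc] at hm ⊢
      rw [hσ_def, Equiv.swap_apply_def]
      split_ifs <;> omega
    obtain ⟨m', hm', rfl⟩ := hp.mem_image_of_le hjn hσm hba
    have hm'j : m' ≠ j := by
      intro hm'j
      rw [hm'j] at hba
      have hjσ := hp.le_of_cell_le ⟨hj, by omega⟩ ⟨hσm.1, hσm.2.trans hjn⟩ hba
      have hσk : σ m = j + 1 := le_antisymm hσm.2 (by omega)
      exact h (hσk ▸ hba)
    refine ⟨σ m', ?_, by simp [σ]⟩
    simp only [mem_Icc] at hm' ⊢
    rw [hσ_def, Equiv.swap_apply_def]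
    split_ifs <;> omega
  · rw [image_comp, hσ k hkj]
    exact (isStdTab_iff.1 hp).2 k hk

end IsStdTab

/-- For a standard Young tableau `T` with `n` boxes and `1 < i < n`, the result
`D_i(T)` of applying the elementary dual equivalence operator is again a
standard Young tableau. -/
theorem Dop_isStdTab (n i : ℕ) (hi1 : 1 < i) (hi2 : i < n)
    (p : ℕ → Cell) (hp : IsStdTab n p) : IsStdTab n (Dop i p) := by
  obtain ⟨j, rfl⟩ : ∃ j, i = j + 1 := ⟨i - 1, by omega⟩
  unfold Dop
  simp only [Nat.add_sub_cancel]
  split_ifs with h₁ h₂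
  · refine hp.comp_swap (by omega) hi2.le fun hle => ?_
    have := hp.lt_or_lt_of_btwIn_succ (by omega) hi2.le ⟨by omega, hi2⟩ hle (btwIn_comm.1 h₁)
    omega
  · refine hp.comp_swap (by omega) hi2 fun hle => ?_
    have := hp.lt_or_lt_of_btwIn_succ (by omega) hi2 ⟨by omega, by omega⟩ hle h₂
    omega
  · exact hp
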